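/- arXiv:2111.01588 — 2 statements merged into one kernel-verified Lean document; each statement's English description precedes it below -/
import Mathlib

section
/- The identities Σ_{i=0}^4 n_i = 3 e_2^2 - 4 e_1 e_3, Σ_{i=0}^4 u_i n_i = e_2 e_3, and Σ_{i=0}^4 u_i^2 n_i = 3 e_3^2 - 4 e_4 e_2 hold as polynomial identities, where n_i = e_2(i)^2 - e_1(i) e_3(i). -/
/-- Elementary symmetric polynomial of degree `m` of the values of `u` on a finite set. -/
def esym5 (u : Fin 5 → ℚ) (s : Finset (Fin 5)) (m : ℕ) : ℚ :=
  ∑ t ∈ s.powersetCard m, ∏ j ∈ t, u j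

/-- `n_i = e₂(i)² - e₁(i)e₃(i)`. -/
def npart (u : Fin 5 → ℚ) (i : Fin 5) : ℚ :=
  (esym5 u {i}ᶜ 2)^2 - esym5 u {i}ᶜ 1 * esym5 u {i}ᶜ 3

lemma euniv1 (u : Fin 5 → ℚ) : esym5 u Finset.univ 1 = u 0 + u 1 + u 2 + u 3 + u 4 := by
  simp only [esym5]
  rw [show ((Finset.univ : Finset (Fin 5)).powersetCard 1) = ({{0},{1},{2},{3},{4}} : Finset (Finset (Fin 5))) from by decide]
  simp (config := { decide := true }) [Finset.sum_insert, Finset.prod_insert]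
  ring

lemma euniv2 (u : Fin 5 → ℚ) : esym5 u Finset.univ 2 = u 0*u 1 + u 0*u 2 + u 0*u 3 + u 0*u 4 + u 1*u 2 + u 1*u 3 + u 1*u 4 + u 2*u 3 + u 2*u 4 + u 3*u 4 := by
  simp only [esym5]
  rw [show ((Finset.univ : Finset (Fin 5)).powersetCard 2) = ({{0,1},{0,2},{0,3},{0,4},{1,2},{1,3},{1,4},{2,3},{2,4},{3,4}} : Finset (Finset (Fin 5))) from by decide]
  simp (config := { decide := true }) [Finset.sum_insert, Finset.prod_insert]
  ring

lemma euniv3 (u : Fin 5 → ℚ) : esym5 u Finset.univ 3 = u 0*u 1*u 2 + u 0*u 1*u 3 + u 0*u 1*u 4 + u 0*u 2*u 3 + u 0*u 2*u 4 + u 0*u 3*u 4 + u 1*u 2*u 3 + u 1*u 2*u 4 + u 1*u 3*u 4 + u 2*u 3*u 4 := by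
  simp only [esym5]
  rw [show ((Finset.univ : Finset (Fin 5)).powersetCard 3) = ({{0,1,2},{0,1,3},{0,1,4},{0,2,3},{0,2,4},{0,3,4},{1,2,3},{1,2,4},{1,3,4},{2,3,4}} : Finset (Finset (Fin 5))) from by decide]
  simp (config := { decide := true }) [Finset.sum_insert, Finset.prod_insert]
  ring

lemma euniv4 (u : Fin 5 → ℚ) : esym5 u Finset.univ 4 = u 0*u 1*u 2*u 3 + u 0*u 1*u 2*u 4 + u 0*u 1*u 3*u 4 + u 0*u 2*u 3*u 4 + u 1*u 2*u 3*u 4 := by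
  simp only [esym5]
  rw [show ((Finset.univ : Finset (Fin 5)).powersetCard 4) = ({{0,1,2,3},{0,1,2,4},{0,1,3,4},{0,2,3,4},{1,2,3,4}} : Finset (Finset (Fin 5))) from by decide]
  simp (config := { decide := true }) [Finset.sum_insert, Finset.prod_insert]
  ring

lemma ec0_1 (u : Fin 5 → ℚ) : esym5 u ({(0:Fin 5)}ᶜ) 1 = u 1 + u 2 + u 3 + u 4 := by
  simp only [esym5]
  rw [show ((({(0:Fin 5)}ᶜ) : Finset (Fin 5)).powersetCard 1) = ({{1},{2},{3},{4}} : Finset (Finset (Fin 5))) from by decide]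
  simp (config := { decide := true }) [Finset.sum_insert, Finset.prod_insert]
  ring

lemma ec0_2 (u : Fin 5 → ℚ) : esym5 u ({(0:Fin 5)}ᶜ) 2 = u 1*u 2 + u 1*u 3 + u 1*u 4 + u 2*u 3 + u 2*u 4 + u 3*u 4 := by
  simp only [esym5]
  rw [show ((({(0:Fin 5)}ᶜ) : Finset (Fin 5)).powersetCard 2) = ({{1,2},{1,3},{1,4},{2,3},{2,4},{3,4}} : Finset (Finset (Fin 5))) from by decide]
  simp (config := { decide := true }) [Finset.sum_insert, Finset.prod_insert]
  ring

lemma ec0_3 (u : Fin 5 → ℚ) : esym5 u ({(0:Fin 5)}ᶜ) 3 = u 1*u 2*u 3 + u 1*u 2*u 4 + u 1*u 3*u 4 + u 2*u 3*u 4 := by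
  simp only [esym5]
  rw [show ((({(0:Fin 5)}ᶜ) : Finset (Fin 5)).powersetCard 3) = ({{1,2,3},{1,2,4},{1,3,4},{2,3,4}} : Finset (Finset (Fin 5))) from by decide]
  simp (config := { decide := true }) [Finset.sum_insert, Finset.prod_insert]
  ring

lemma ec1_1 (u : Fin 5 → ℚ) : esym5 u ({(1:Fin 5)}ᶜ) 1 = u 0 + u 2 + u 3 + u 4 := by
  simp only [esym5]
  rw [show ((({(1:Fin 5)}ᶜ) : Finset (Fin 5)).powersetCard 1) = ({{0},{2},{3},{4}} : Finset (Finset (Fin 5))) from by decide]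
  simp (config := { decide := true }) [Finset.sum_insert, Finset.prod_insert]
  ring

lemma ec1_2 (u : Fin 5 → ℚ) : esym5 u ({(1:Fin 5)}ᶜ) 2 = u 0*u 2 + u 0*u 3 + u 0*u 4 + u 2*u 3 + u 2*u 4 + u 3*u 4 := by
  simp only [esym5]
  rw [show ((({(1:Fin 5)}ᶜ) : Finset (Fin 5)).powersetCard 2) = ({{0,2},{0,3},{0,4},{2,3},{2,4},{3,4}} : Finset (Finset (Fin 5))) from by decide]
  simp (config := { decide := true }) [Finset.sum_insert, Finset.prod_insert]
  ring

lemma ec1_3 (u : Fin 5 → ℚ) : esym5 u ({(1:Fin 5)}ᶜ) 3 = u 0*u 2*u 3 + u 0*u 2*u 4 + u 0*u 3*u 4 + u 2*u 3*u 4 := by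
  simp only [esym5]
  rw [show ((({(1:Fin 5)}ᶜ) : Finset (Fin 5)).powersetCard 3) = ({{0,2,3},{0,2,4},{0,3,4},{2,3,4}} : Finset (Finset (Fin 5))) from by decide]
  simp (config := { decide := true }) [Finset.sum_insert, Finset.prod_insert]
  ring

lemma ec2_1 (u : Fin 5 → ℚ) : esym5 u ({(2:Fin 5)}ᶜ) 1 = u 0 + u 1 + u 3 + u 4 := by
  simp only [esym5]
  rw [show ((({(2:Fin 5)}ᶜ) : Finset (Fin 5)).powersetCard 1) = ({{0},{1},{3},{4}} : Finset (Finset (Fin 5))) from by decide]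
  simp (config := { decide := true }) [Finset.sum_insert, Finset.prod_insert]
  ring

lemma ec2_2 (u : Fin 5 → ℚ) : esym5 u ({(2:Fin 5)}ᶜ) 2 = u 0*u 1 + u 0*u 3 + u 0*u 4 + u 1*u 3 + u 1*u 4 + u 3*u 4 := by
  simp only [esym5]
  rw [show ((({(2:Fin 5)}ᶜ) : Finset (Fin 5)).powersetCard 2) = ({{0,1},{0,3},{0,4},{1,3},{1,4},{3,4}} : Finset (Finset (Fin 5))) from by decide]
  simp (config := { decide := true }) [Finset.sum_insert, Finset.prod_insert]
  ring

lemma ec2_3 (u : Fin 5 → ℚ) : esym5 u ({(2:Fin 5)}ᶜ) 3 = u 0*u 1*u 3 + u 0*u 1*u 4 + u 0*u 3*u 4 + u 1*u 3*u 4 := by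
  simp only [esym5]
  rw [show ((({(2:Fin 5)}ᶜ) : Finset (Fin 5)).powersetCard 3) = ({{0,1,3},{0,1,4},{0,3,4},{1,3,4}} : Finset (Finset (Fin 5))) from by decide]
  simp (config := { decide := true }) [Finset.sum_insert, Finset.prod_insert]
  ring

lemma ec3_1 (u : Fin 5 → ℚ) : esym5 u ({(3:Fin 5)}ᶜ) 1 = u 0 + u 1 + u 2 + u 4 := by
  simp only [esym5]
  rw [show ((({(3:Fin 5)}ᶜ) : Finset (Fin 5)).powersetCard 1) = ({{0},{1},{2},{4}} : Finset (Finset (Fin 5))) from by decide]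
  simp (config := { decide := true }) [Finset.sum_insert, Finset.prod_insert]
  ring

lemma ec3_2 (u : Fin 5 → ℚ) : esym5 u ({(3:Fin 5)}ᶜ) 2 = u 0*u 1 + u 0*u 2 + u 0*u 4 + u 1*u 2 + u 1*u 4 + u 2*u 4 := by
  simp only [esym5]
  rw [show ((({(3:Fin 5)}ᶜ) : Finset (Fin 5)).powersetCard 2) = ({{0,1},{0,2},{0,4},{1,2},{1,4},{2,4}} : Finset (Finset (Fin 5))) from by decide]
  simp (config := { decide := true }) [Finset.sum_insert, Finset.prod_insert]
  ring

lemma ec3_3 (u : Fin 5 → ℚ) : esym5 u ({(3:Fin 5)}ᶜ) 3 = u 0*u 1*u 2 + u 0*u 1*u 4 + u 0*u 2*u 4 + u 1*u 2*u 4 := by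
  simp only [esym5]
  rw [show ((({(3:Fin 5)}ᶜ) : Finset (Fin 5)).powersetCard 3) = ({{0,1,2},{0,1,4},{0,2,4},{1,2,4}} : Finset (Finset (Fin 5))) from by decide]
  simp (config := { decide := true }) [Finset.sum_insert, Finset.prod_insert]
  ring

lemma ec4_1 (u : Fin 5 → ℚ) : esym5 u ({(4:Fin 5)}ᶜ) 1 = u 0 + u 1 + u 2 + u 3 := by
  simp only [esym5]
  rw [show ((({(4:Fin 5)}ᶜ) : Finset (Fin 5)).powersetCard 1) = ({{0},{1},{2},{3}} : Finset (Finset (Fin 5))) from by decide]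
  simp (config := { decide := true }) [Finset.sum_insert, Finset.prod_insert]
  ring

lemma ec4_2 (u : Fin 5 → ℚ) : esym5 u ({(4:Fin 5)}ᶜ) 2 = u 0*u 1 + u 0*u 2 + u 0*u 3 + u 1*u 2 + u 1*u 3 + u 2*u 3 := by
  simp only [esym5]
  rw [show ((({(4:Fin 5)}ᶜ) : Finset (Fin 5)).powersetCard 2) = ({{0,1},{0,2},{0,3},{1,2},{1,3},{2,3}} : Finset (Finset (Fin 5))) from by decide]
  simp (config := { decide := true }) [Finset.sum_insert, Finset.prod_insert]
  ring

lemma ec4_3 (u : Fin 5 → ℚ) : esym5 u ({(4:Fin 5)}ᶜ) 3 = u 0*u 1*u 2 + u 0*u 1*u 3 + u 0*u 2*u 3 + u 1*u 2*u 3 := by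
  simp only [esym5]
  rw [show ((({(4:Fin 5)}ᶜ) : Finset (Fin 5)).powersetCard 3) = ({{0,1,2},{0,1,3},{0,2,3},{1,2,3}} : Finset (Finset (Fin 5))) from by decide]
  simp (config := { decide := true }) [Finset.sum_insert, Finset.prod_insert]
  ring


/-- The identities `Σ n_i = 3e₂² - 4e₁e₃`, `Σ u_i n_i = e₂e₃`,
`Σ u_i² n_i = 3e₃² - 4e₄e₂`. -/
theorem npart_symmetric_sums (u : Fin 5 → ℚ) :
    (∑ i, npart u i =
        3 * (esym5 u Finset.univ 2)^2 - 4 * esym5 u Finset.univ 1 * esym5 u Finset.univ 3) ∧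
    (∑ i, u i * npart u i = esym5 u Finset.univ 2 * esym5 u Finset.univ 3) ∧
    (∑ i, (u i)^2 * npart u i =
        3 * (esym5 u Finset.univ 3)^2 - 4 * esym5 u Finset.univ 4 * esym5 u Finset.univ 2) := by
  refine ⟨?_, ?_, ?_⟩ <;>
  · simp only [npart, Fin.sum_univ_five, euniv1, euniv2, euniv3, euniv4,
      ec0_1, ec0_2, ec0_3, ec1_1, ec1_2, ec1_3, ec2_1, ec2_2, ec2_3,
      ec3_1, ec3_2, ec3_3, ec4_1, ec4_2, ec4_3]
    ring
end

section
/- The symmetric polynomials S_{m0} defined by Σ_{i=0}^4 M_i(U) u_i^m = δ(U)·S_{m0}(U) have initial values S_{00} = S_{10} = 0, S_{20} = e_2, S_{30} = e_3, S_{40} = S_{50} = 0, where e_2, e_3 are the elementary symmetric polynomials in u0,...,u4 and δ(U) = ∏_{j>k}(u_j - u_k). -/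
/-- `d_i = ∏_{j>k, j,k≠i} (u_j - u_k)`. -/
def dpart (u : Fin 5 → ℚ) (i : Fin 5) : ℚ :=
  ∏ p ∈ Finset.univ.filter
      (fun p : Fin 5 × Fin 5 => p.2 < p.1 ∧ p.1 ≠ i ∧ p.2 ≠ i), (u p.1 - u p.2)

/-- `M_i = (-1)^i d_i n_i`. -/
def Mpart (u : Fin 5 → ℚ) (i : Fin 5) : ℚ :=
  (-1)^(i : ℕ) * dpart u i * npart u i

/-- The discriminant `δ = ∏_{j>k} (u_j - u_k)`. -/
def delta5 (u : Fin 5 → ℚ) : ℚ :=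
  ∏ p ∈ Finset.univ.filter (fun p : Fin 5 × Fin 5 => p.2 < p.1), (u p.1 - u p.2)

lemma dpart0 (u : Fin 5 → ℚ) : dpart u 0 = (u 2 - u 1) * (u 3 - u 1) * (u 3 - u 2) * (u 4 - u 1) * (u 4 - u 2) * (u 4 - u 3) := by
  rw [dpart, show Finset.univ.filter (fun p : Fin 5 × Fin 5 => p.2 < p.1 ∧ p.1 ≠ 0 ∧ p.2 ≠ 0) = ({((2:Fin 5),(1:Fin 5)), ((3:Fin 5),(1:Fin 5)), ((3:Fin 5),(2:Fin 5)), ((4:Fin 5),(1:Fin 5)), ((4:Fin 5),(2:Fin 5)), ((4:Fin 5),(3:Fin 5))} : Finset (Fin 5 × Fin 5)) from by decide]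
  simp +decide [Finset.prod_insert]
  ring

lemma dpart1 (u : Fin 5 → ℚ) : dpart u 1 = (u 2 - u 0) * (u 3 - u 0) * (u 3 - u 2) * (u 4 - u 0) * (u 4 - u 2) * (u 4 - u 3) := by
  rw [dpart, show Finset.univ.filter (fun p : Fin 5 × Fin 5 => p.2 < p.1 ∧ p.1 ≠ 1 ∧ p.2 ≠ 1) = ({((2:Fin 5),(0:Fin 5)), ((3:Fin 5),(0:Fin 5)), ((3:Fin 5),(2:Fin 5)), ((4:Fin 5),(0:Fin 5)), ((4:Fin 5),(2:Fin 5)), ((4:Fin 5),(3:Fin 5))} : Finset (Fin 5 × Fin 5)) from by decide]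
  simp +decide [Finset.prod_insert]
  ring

lemma dpart2 (u : Fin 5 → ℚ) : dpart u 2 = (u 1 - u 0) * (u 3 - u 0) * (u 3 - u 1) * (u 4 - u 0) * (u 4 - u 1) * (u 4 - u 3) := by
  rw [dpart, show Finset.univ.filter (fun p : Fin 5 × Fin 5 => p.2 < p.1 ∧ p.1 ≠ 2 ∧ p.2 ≠ 2) = ({((1:Fin 5),(0:Fin 5)), ((3:Fin 5),(0:Fin 5)), ((3:Fin 5),(1:Fin 5)), ((4:Fin 5),(0:Fin 5)), ((4:Fin 5),(1:Fin 5)), ((4:Fin 5),(3:Fin 5))} : Finset (Fin 5 × Fin 5)) from by decide]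
  simp +decide [Finset.prod_insert]
  ring

lemma dpart3 (u : Fin 5 → ℚ) : dpart u 3 = (u 1 - u 0) * (u 2 - u 0) * (u 2 - u 1) * (u 4 - u 0) * (u 4 - u 1) * (u 4 - u 2) := by
  rw [dpart, show Finset.univ.filter (fun p : Fin 5 × Fin 5 => p.2 < p.1 ∧ p.1 ≠ 3 ∧ p.2 ≠ 3) = ({((1:Fin 5),(0:Fin 5)), ((2:Fin 5),(0:Fin 5)), ((2:Fin 5),(1:Fin 5)), ((4:Fin 5),(0:Fin 5)), ((4:Fin 5),(1:Fin 5)), ((4:Fin 5),(2:Fin 5))} : Finset (Fin 5 × Fin 5)) from by decide]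
  simp +decide [Finset.prod_insert]
  ring

lemma dpart4 (u : Fin 5 → ℚ) : dpart u 4 = (u 1 - u 0) * (u 2 - u 0) * (u 2 - u 1) * (u 3 - u 0) * (u 3 - u 1) * (u 3 - u 2) := by
  rw [dpart, show Finset.univ.filter (fun p : Fin 5 × Fin 5 => p.2 < p.1 ∧ p.1 ≠ 4 ∧ p.2 ≠ 4) = ({((1:Fin 5),(0:Fin 5)), ((2:Fin 5),(0:Fin 5)), ((2:Fin 5),(1:Fin 5)), ((3:Fin 5),(0:Fin 5)), ((3:Fin 5),(1:Fin 5)), ((3:Fin 5),(2:Fin 5))} : Finset (Fin 5 × Fin 5)) from by decide]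
  simp +decide [Finset.prod_insert]
  ring

lemma delta5_eq (u : Fin 5 → ℚ) : delta5 u = (u 1 - u 0) * (u 2 - u 0) * (u 2 - u 1) * (u 3 - u 0) * (u 3 - u 1) * (u 3 - u 2) * (u 4 - u 0) * (u 4 - u 1) * (u 4 - u 2) * (u 4 - u 3) := by
  rw [delta5, show Finset.univ.filter (fun p : Fin 5 × Fin 5 => p.2 < p.1) = ({((1:Fin 5),(0:Fin 5)), ((2:Fin 5),(0:Fin 5)), ((2:Fin 5),(1:Fin 5)), ((3:Fin 5),(0:Fin 5)), ((3:Fin 5),(1:Fin 5)), ((3:Fin 5),(2:Fin 5)), ((4:Fin 5),(0:Fin 5)), ((4:Fin 5),(1:Fin 5)), ((4:Fin 5),(2:Fin 5)), ((4:Fin 5),(3:Fin 5))} : Finset (Fin 5 × Fin 5)) from by decide]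
  simp +decide [Finset.prod_insert]
  ring

lemma esym_c0_1 (u : Fin 5 → ℚ) : esym5 u ({(0:Fin 5)} : Finset (Fin 5))ᶜ 1 = u 1 + u 2 + u 3 + u 4 := by
  rw [esym5, show (({(0:Fin 5)} : Finset (Fin 5))ᶜ : Finset (Fin 5)).powersetCard 1 = ({{(1:Fin 5)}, {(2:Fin 5)}, {(3:Fin 5)}, {(4:Fin 5)}} : Finset (Finset (Fin 5))) from by decide]
  simp +decide [Finset.sum_insert, Finset.prod_insert]
  ring

lemma esym_c0_2 (u : Fin 5 → ℚ) : esym5 u ({(0:Fin 5)} : Finset (Fin 5))ᶜ 2 = u 1*u 2 + u 1*u 3 + u 1*u 4 + u 2*u 3 + u 2*u 4 + u 3*u 4 := by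
  rw [esym5, show (({(0:Fin 5)} : Finset (Fin 5))ᶜ : Finset (Fin 5)).powersetCard 2 = ({{(1:Fin 5),(2:Fin 5)}, {(1:Fin 5),(3:Fin 5)}, {(1:Fin 5),(4:Fin 5)}, {(2:Fin 5),(3:Fin 5)}, {(2:Fin 5),(4:Fin 5)}, {(3:Fin 5),(4:Fin 5)}} : Finset (Finset (Fin 5))) from by decide]
  simp +decide [Finset.sum_insert, Finset.prod_insert]
  ring

lemma esym_c0_3 (u : Fin 5 → ℚ) : esym5 u ({(0:Fin 5)} : Finset (Fin 5))ᶜ 3 = u 1*u 2*u 3 + u 1*u 2*u 4 + u 1*u 3*u 4 + u 2*u 3*u 4 := by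
  rw [esym5, show (({(0:Fin 5)} : Finset (Fin 5))ᶜ : Finset (Fin 5)).powersetCard 3 = ({{(1:Fin 5),(2:Fin 5),(3:Fin 5)}, {(1:Fin 5),(2:Fin 5),(4:Fin 5)}, {(1:Fin 5),(3:Fin 5),(4:Fin 5)}, {(2:Fin 5),(3:Fin 5),(4:Fin 5)}} : Finset (Finset (Fin 5))) from by decide]
  simp +decide [Finset.sum_insert, Finset.prod_insert]
  ring

lemma esym_c1_1 (u : Fin 5 → ℚ) : esym5 u ({(1:Fin 5)} : Finset (Fin 5))ᶜ 1 = u 0 + u 2 + u 3 + u 4 := by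
  rw [esym5, show (({(1:Fin 5)} : Finset (Fin 5))ᶜ : Finset (Fin 5)).powersetCard 1 = ({{(0:Fin 5)}, {(2:Fin 5)}, {(3:Fin 5)}, {(4:Fin 5)}} : Finset (Finset (Fin 5))) from by decide]
  simp +decide [Finset.sum_insert, Finset.prod_insert]
  ring

lemma esym_c1_2 (u : Fin 5 → ℚ) : esym5 u ({(1:Fin 5)} : Finset (Fin 5))ᶜ 2 = u 0*u 2 + u 0*u 3 + u 0*u 4 + u 2*u 3 + u 2*u 4 + u 3*u 4 := by
  rw [esym5, show (({(1:Fin 5)} : Finset (Fin 5))ᶜ : Finset (Fin 5)).powersetCard 2 = ({{(0:Fin 5),(2:Fin 5)}, {(0:Fin 5),(3:Fin 5)}, {(0:Fin 5),(4:Fin 5)}, {(2:Fin 5),(3:Fin 5)}, {(2:Fin 5),(4:Fin 5)}, {(3:Fin 5),(4:Fin 5)}} : Finset (Finset (Fin 5))) from by decide]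
  simp +decide [Finset.sum_insert, Finset.prod_insert]
  ring

lemma esym_c1_3 (u : Fin 5 → ℚ) : esym5 u ({(1:Fin 5)} : Finset (Fin 5))ᶜ 3 = u 0*u 2*u 3 + u 0*u 2*u 4 + u 0*u 3*u 4 + u 2*u 3*u 4 := by
  rw [esym5, show (({(1:Fin 5)} : Finset (Fin 5))ᶜ : Finset (Fin 5)).powersetCard 3 = ({{(0:Fin 5),(2:Fin 5),(3:Fin 5)}, {(0:Fin 5),(2:Fin 5),(4:Fin 5)}, {(0:Fin 5),(3:Fin 5),(4:Fin 5)}, {(2:Fin 5),(3:Fin 5),(4:Fin 5)}} : Finset (Finset (Fin 5))) from by decide]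
  simp +decide [Finset.sum_insert, Finset.prod_insert]
  ring

lemma esym_c2_1 (u : Fin 5 → ℚ) : esym5 u ({(2:Fin 5)} : Finset (Fin 5))ᶜ 1 = u 0 + u 1 + u 3 + u 4 := by
  rw [esym5, show (({(2:Fin 5)} : Finset (Fin 5))ᶜ : Finset (Fin 5)).powersetCard 1 = ({{(0:Fin 5)}, {(1:Fin 5)}, {(3:Fin 5)}, {(4:Fin 5)}} : Finset (Finset (Fin 5))) from by decide]
  simp +decide [Finset.sum_insert, Finset.prod_insert]
  ring

lemma esym_c2_2 (u : Fin 5 → ℚ) : esym5 u ({(2:Fin 5)} : Finset (Fin 5))ᶜ 2 = u 0*u 1 + u 0*u 3 + u 0*u 4 + u 1*u 3 + u 1*u 4 + u 3*u 4 := by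
  rw [esym5, show (({(2:Fin 5)} : Finset (Fin 5))ᶜ : Finset (Fin 5)).powersetCard 2 = ({{(0:Fin 5),(1:Fin 5)}, {(0:Fin 5),(3:Fin 5)}, {(0:Fin 5),(4:Fin 5)}, {(1:Fin 5),(3:Fin 5)}, {(1:Fin 5),(4:Fin 5)}, {(3:Fin 5),(4:Fin 5)}} : Finset (Finset (Fin 5))) from by decide]
  simp +decide [Finset.sum_insert, Finset.prod_insert]
  ring

lemma esym_c2_3 (u : Fin 5 → ℚ) : esym5 u ({(2:Fin 5)} : Finset (Fin 5))ᶜ 3 = u 0*u 1*u 3 + u 0*u 1*u 4 + u 0*u 3*u 4 + u 1*u 3*u 4 := by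
  rw [esym5, show (({(2:Fin 5)} : Finset (Fin 5))ᶜ : Finset (Fin 5)).powersetCard 3 = ({{(0:Fin 5),(1:Fin 5),(3:Fin 5)}, {(0:Fin 5),(1:Fin 5),(4:Fin 5)}, {(0:Fin 5),(3:Fin 5),(4:Fin 5)}, {(1:Fin 5),(3:Fin 5),(4:Fin 5)}} : Finset (Finset (Fin 5))) from by decide]
  simp +decide [Finset.sum_insert, Finset.prod_insert]
  ring

lemma esym_c3_1 (u : Fin 5 → ℚ) : esym5 u ({(3:Fin 5)} : Finset (Fin 5))ᶜ 1 = u 0 + u 1 + u 2 + u 4 := by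
  rw [esym5, show (({(3:Fin 5)} : Finset (Fin 5))ᶜ : Finset (Fin 5)).powersetCard 1 = ({{(0:Fin 5)}, {(1:Fin 5)}, {(2:Fin 5)}, {(4:Fin 5)}} : Finset (Finset (Fin 5))) from by decide]
  simp +decide [Finset.sum_insert, Finset.prod_insert]
  ring

lemma esym_c3_2 (u : Fin 5 → ℚ) : esym5 u ({(3:Fin 5)} : Finset (Fin 5))ᶜ 2 = u 0*u 1 + u 0*u 2 + u 0*u 4 + u 1*u 2 + u 1*u 4 + u 2*u 4 := by
  rw [esym5, show (({(3:Fin 5)} : Finset (Fin 5))ᶜ : Finset (Fin 5)).powersetCard 2 = ({{(0:Fin 5),(1:Fin 5)}, {(0:Fin 5),(2:Fin 5)}, {(0:Fin 5),(4:Fin 5)}, {(1:Fin 5),(2:Fin 5)}, {(1:Fin 5),(4:Fin 5)}, {(2:Fin 5),(4:Fin 5)}} : Finset (Finset (Fin 5))) from by decide]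
  simp +decide [Finset.sum_insert, Finset.prod_insert]
  ring

lemma esym_c3_3 (u : Fin 5 → ℚ) : esym5 u ({(3:Fin 5)} : Finset (Fin 5))ᶜ 3 = u 0*u 1*u 2 + u 0*u 1*u 4 + u 0*u 2*u 4 + u 1*u 2*u 4 := by
  rw [esym5, show (({(3:Fin 5)} : Finset (Fin 5))ᶜ : Finset (Fin 5)).powersetCard 3 = ({{(0:Fin 5),(1:Fin 5),(2:Fin 5)}, {(0:Fin 5),(1:Fin 5),(4:Fin 5)}, {(0:Fin 5),(2:Fin 5),(4:Fin 5)}, {(1:Fin 5),(2:Fin 5),(4:Fin 5)}} : Finset (Finset (Fin 5))) from by decide]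
  simp +decide [Finset.sum_insert, Finset.prod_insert]
  ring

lemma esym_c4_1 (u : Fin 5 → ℚ) : esym5 u ({(4:Fin 5)} : Finset (Fin 5))ᶜ 1 = u 0 + u 1 + u 2 + u 3 := by
  rw [esym5, show (({(4:Fin 5)} : Finset (Fin 5))ᶜ : Finset (Fin 5)).powersetCard 1 = ({{(0:Fin 5)}, {(1:Fin 5)}, {(2:Fin 5)}, {(3:Fin 5)}} : Finset (Finset (Fin 5))) from by decide]
  simp +decide [Finset.sum_insert, Finset.prod_insert]
  ring

lemma esym_c4_2 (u : Fin 5 → ℚ) : esym5 u ({(4:Fin 5)} : Finset (Fin 5))ᶜ 2 = u 0*u 1 + u 0*u 2 + u 0*u 3 + u 1*u 2 + u 1*u 3 + u 2*u 3 := by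
  rw [esym5, show (({(4:Fin 5)} : Finset (Fin 5))ᶜ : Finset (Fin 5)).powersetCard 2 = ({{(0:Fin 5),(1:Fin 5)}, {(0:Fin 5),(2:Fin 5)}, {(0:Fin 5),(3:Fin 5)}, {(1:Fin 5),(2:Fin 5)}, {(1:Fin 5),(3:Fin 5)}, {(2:Fin 5),(3:Fin 5)}} : Finset (Finset (Fin 5))) from by decide]
  simp +decide [Finset.sum_insert, Finset.prod_insert]
  ring

lemma esym_c4_3 (u : Fin 5 → ℚ) : esym5 u ({(4:Fin 5)} : Finset (Fin 5))ᶜ 3 = u 0*u 1*u 2 + u 0*u 1*u 3 + u 0*u 2*u 3 + u 1*u 2*u 3 := by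
  rw [esym5, show (({(4:Fin 5)} : Finset (Fin 5))ᶜ : Finset (Fin 5)).powersetCard 3 = ({{(0:Fin 5),(1:Fin 5),(2:Fin 5)}, {(0:Fin 5),(1:Fin 5),(3:Fin 5)}, {(0:Fin 5),(2:Fin 5),(3:Fin 5)}, {(1:Fin 5),(2:Fin 5),(3:Fin 5)}} : Finset (Finset (Fin 5))) from by decide]
  simp +decide [Finset.sum_insert, Finset.prod_insert]
  ring

lemma esym_univ_2 (u : Fin 5 → ℚ) : esym5 u (Finset.univ : Finset (Fin 5)) 2 = u 0*u 1 + u 0*u 2 + u 0*u 3 + u 0*u 4 + u 1*u 2 + u 1*u 3 + u 1*u 4 + u 2*u 3 + u 2*u 4 + u 3*u 4 := by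
  rw [esym5, show ((Finset.univ : Finset (Fin 5)) : Finset (Fin 5)).powersetCard 2 = ({{(0:Fin 5),(1:Fin 5)}, {(0:Fin 5),(2:Fin 5)}, {(0:Fin 5),(3:Fin 5)}, {(0:Fin 5),(4:Fin 5)}, {(1:Fin 5),(2:Fin 5)}, {(1:Fin 5),(3:Fin 5)}, {(1:Fin 5),(4:Fin 5)}, {(2:Fin 5),(3:Fin 5)}, {(2:Fin 5),(4:Fin 5)}, {(3:Fin 5),(4:Fin 5)}} : Finset (Finset (Fin 5))) from by decide]
  simp +decide [Finset.sum_insert, Finset.prod_insert]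
  ring

lemma esym_univ_3 (u : Fin 5 → ℚ) : esym5 u (Finset.univ : Finset (Fin 5)) 3 = u 0*u 1*u 2 + u 0*u 1*u 3 + u 0*u 1*u 4 + u 0*u 2*u 3 + u 0*u 2*u 4 + u 0*u 3*u 4 + u 1*u 2*u 3 + u 1*u 2*u 4 + u 1*u 3*u 4 + u 2*u 3*u 4 := by
  rw [esym5, show ((Finset.univ : Finset (Fin 5)) : Finset (Fin 5)).powersetCard 3 = ({{(0:Fin 5),(1:Fin 5),(2:Fin 5)}, {(0:Fin 5),(1:Fin 5),(3:Fin 5)}, {(0:Fin 5),(1:Fin 5),(4:Fin 5)}, {(0:Fin 5),(2:Fin 5),(3:Fin 5)}, {(0:Fin 5),(2:Fin 5),(4:Fin 5)}, {(0:Fin 5),(3:Fin 5),(4:Fin 5)}, {(1:Fin 5),(2:Fin 5),(3:Fin 5)}, {(1:Fin 5),(2:Fin 5),(4:Fin 5)}, {(1:Fin 5),(3:Fin 5),(4:Fin 5)}, {(2:Fin 5),(3:Fin 5),(4:Fin 5)}} : Finset (Finset (Fin 5))) from by decide]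
  simp +decide [Finset.sum_insert, Finset.prod_insert]
  ring

set_option maxHeartbeats 4000000 in
/-- Initial values of `S_{m0}` (defined by `Σ M_i u_i^m = δ·S_{m0}`):
`S₀₀ = S₁₀ = 0`, `S₂₀ = e₂`, `S₃₀ = e₃`, `S₄₀ = S₅₀ = 0`. -/
theorem S_m0_initial_values (u : Fin 5 → ℚ) :
    (∑ i, Mpart u i = 0) ∧ (∑ i, Mpart u i * u i = 0) ∧
    (∑ i, Mpart u i * (u i)^2 = delta5 u * esym5 u Finset.univ 2) ∧
    (∑ i, Mpart u i * (u i)^3 = delta5 u * esym5 u Finset.univ 3) ∧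
    (∑ i, Mpart u i * (u i)^4 = 0) ∧ (∑ i, Mpart u i * (u i)^5 = 0) := by
  have h : ∀ i : Fin 5, Mpart u i = (-1)^(i:ℕ) * dpart u i *
      ((esym5 u ({i} : Finset (Fin 5))ᶜ 2)^2 - esym5 u ({i} : Finset (Fin 5))ᶜ 1 * esym5 u ({i} : Finset (Fin 5))ᶜ 3) := fun i => rfl
  refine ⟨?_, ?_, ?_, ?_, ?_, ?_⟩ <;>
  · simp only [Fin.sum_univ_five, h, Fin.val_zero, Fin.val_one, Fin.val_two,
      show ((3:Fin 5):ℕ) = 3 from rfl, show ((4:Fin 5):ℕ) = 4 from rfl,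
      dpart0, dpart1, dpart2, dpart3, dpart4,
      esym_c0_1, esym_c0_2, esym_c0_3, esym_c1_1, esym_c1_2, esym_c1_3,
      esym_c2_1, esym_c2_2, esym_c2_3, esym_c3_1, esym_c3_2, esym_c3_3,
      esym_c4_1, esym_c4_2, esym_c4_3, delta5_eq, esym_univ_2, esym_univ_3]
    ring
end
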